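/- Let n be even and consider the cyclic group ℤ_n with word length ψ(k) = min{k, n−k} for k ∈ {0,…,n−1}. Define b : ℤ_n → ℝ^{n/2} by b(0) = 0, b(k) = e₁ + … + e_k for 1 ≤ k ≤ n/2, and b(k) = e_{k−n/2+1} + … + e_{n/2} for n/2 + 1 ≤ k ≤ n−1. Then ‖b(j) − b(k)‖² = ψ(j − k mod n) for all j, k ∈ ℤ_n. -/

import Mathlib

/-!
Write `n = 2m`. Coordinate `i` of `b(a)` is the indicator of the half-circle `(i, i + m]` of
`ℤ_n`, so `‖b(j) - b(k)‖²` counts the half-circles containing exactly one of `j` and `k`. For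
`k ≤ j` these are the `i` with `i` or `i + m` in `[k, j)` but not both, and there are
`min (j - k) (n - (j - k))` of them.
-/

open Finset

lemma EuclideanSpace.norm_sub_sq_eq_card_of_boole {ι : Type*} [Fintype ι] {p q : ι → Prop}
    [DecidablePred p] [DecidablePred q] {x y : EuclideanSpace ℝ ι}
    (hx : ∀ i, x i = if p i then 1 else 0) (hy : ∀ i, y i = if q i then 1 else 0) :
    ‖x - y‖ ^ 2 = #{i | ¬(p i ↔ q i)} := by
  rw [EuclideanSpace.real_norm_sq_eq, natCast_card_filter]
  refine sum_congr rfl fun i _ => ?_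
  simp only [PiLp.sub_apply, hx, hy]
  split_ifs <;> simp_all

lemma EuclideanSpace.norm_sub_sq_eq_card_range_of_boole {m : ℕ} {p q : ℕ → Prop}
    [DecidablePred p] [DecidablePred q] {x y : EuclideanSpace ℝ (Fin m)}
    (hx : ∀ i : Fin m, x i = if p i then 1 else 0) (hy : ∀ i : Fin m, y i = if q i then 1 else 0) :
    ‖x - y‖ ^ 2 = #{i ∈ range m | ¬(p i ↔ q i)} := by
  rw [norm_sub_sq_eq_card_of_boole hx hy, card_filter, card_filter]
  exact_mod_cast Fin.sum_univ_eq_sum_range (fun i => if ¬(p i ↔ q i) then 1 else 0) m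

lemma ZMod.min_val_neg {n : ℕ} [NeZero n] (x : ZMod n) :
    min (-x).val (n - (-x).val) = min x.val (n - x.val) := by
  have := x.val_lt
  rw [ZMod.neg_val]
  split_ifs with h
  · simp [h]
  · omega

def InHalfCircle (m a i : ℕ) : Prop := i < a ∧ a ≤ i + m

instance (m a : ℕ) : DecidablePred (InHalfCircle m a) := fun _ => instDecidableAnd

lemma card_separating_halfCircles {m a c : ℕ} (ha : a < 2 * m) (hca : c ≤ a) :
    #{i ∈ range m | ¬(InHalfCircle m a i ↔ InHalfCircle m c i)} =
      min (a - c) (2 * m - (a - c)) := by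
  have hsplit : {i ∈ range m | ¬(InHalfCircle m a i ↔ InHalfCircle m c i)} =
      Ico (max c (a - m)) (min a m) ∪ Ico (c - m) (min c (a - m)) := by
    ext i
    simp only [mem_filter, mem_range, mem_union, mem_Ico]
    unfold InHalfCircle
    omega
  have hdisj : Disjoint (Ico (max c (a - m)) (min a m)) (Ico (c - m) (min c (a - m))) := by
    simp only [disjoint_left, mem_Ico]
    omega
  rw [hsplit, card_union_of_disjoint hdisj, Nat.card_Ico, Nat.card_Ico]
  omega

/-- For the cyclic group `ℤ_n` (`n` even) with word length `ψ(k) = min{k, n-k}`, the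
cocycle `b` defined coordinatewise below satisfies `‖b(j) - b(k)‖² = ψ(j - k)`. -/
theorem stmt_7 {n : ℕ} [NeZero n] (hn : Even n)
    (b : ZMod n → EuclideanSpace ℝ (Fin (n / 2)))
    (hb : ∀ (k : ZMod n) (j : Fin (n / 2)),
      b k j = if (k.val ≤ n / 2 ∧ j.val + 1 ≤ k.val) ∨
        (n / 2 < k.val ∧ k.val - n / 2 + 1 ≤ j.val + 1) then 1 else 0) :
    ∀ j k : ZMod n,
      ‖b j - b k‖ ^ 2 = ((min (j - k).val (n - (j - k).val) : ℕ) : ℝ) := by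
  have hn2 : n = 2 * (n / 2) := (Nat.two_mul_div_two_of_even hn).symm
  have hb_halfCircle : ∀ (k : ZMod n) (i : Fin (n / 2)),
      b k i = if InHalfCircle (n / 2) k.val i then 1 else 0 := by
    intro k i
    have := k.val_lt
    rw [hb]
    exact if_congr (by unfold InHalfCircle; omega) rfl rfl
  intro j k
  wlog hkj : k.val ≤ j.val generalizing j k
  · rw [norm_sub_rev, ← neg_sub k j, ZMod.min_val_neg]
    exact this k j (by omega)
  have := j.val_lt
  rw [EuclideanSpace.norm_sub_sq_eq_card_range_of_boole (hb_halfCircle j) (hb_halfCircle k),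
    ZMod.val_sub hkj, card_separating_halfCircles (by omega) hkj, ← hn2]
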